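/- arXiv:2407.04956 — 2 statements merged into one kernel-verified Lean document; each statement's English description precedes it below -/
import Mathlib

section
/- Let p, q be elements of the extended tensor algebra over ℝ^d with |p^∅| < 1 and |q^∅| < 1, and suppose q is dominated by p, i.e. |q^v| ≤ p^v for every word v. Then (∅-q)^{-1} is dominated by (∅-p)^{-1}: |⟨(∅-q)^{-1}, v⟩| ≤ ⟨(∅-p)^{-1}, v⟩ for every word v. -/
open scoped BigOperators

/-- Words over the alphabet `Fin d`. -/
abbrev Word (d : ℕ) := List (Fin d)

/-- The extended tensor algebra over `ℝ^d`, viewed as coefficient functions on words. -/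
abbrev ETA (d : ℕ) := Word d → ℝ

namespace ETA

variable {d : ℕ}

/-- The unit (empty word) element `∅`. -/
noncomputable def unit (d : ℕ) : ETA d := fun v => if v = [] then 1 else 0

/-- Concatenation (tensor) product. -/
noncomputable def concat (p q : ETA d) : ETA d :=
  fun v => ∑ k ∈ Finset.range (v.length + 1), p (v.take k) * q (v.drop k)

/-- Concatenation powers. -/
noncomputable def cpow (p : ETA d) : ℕ → ETA d
  | 0 => unit d
  | n + 1 => concat (cpow p n) p

/-- Shuffle product of two words as a multiset of words. -/
def shuffleW {A : Type*} : List A → List A → Multiset (List A)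
  | [], w => {w}
  | u, [] => {u}
  | a :: u, b :: w =>
      (shuffleW u (b :: w)).map (a :: ·) + (shuffleW (a :: u) w).map (b :: ·)
  termination_by u w => u.length + w.length
  decreasing_by all_goals (simp only [List.length_cons]; omega)

/-- The finset of all words of length `n` over `Fin d`. -/
noncomputable def wordsLen (d n : ℕ) : Finset (Word d) :=
  Finset.image (fun f : Fin n → Fin d => List.ofFn f) Finset.univ

/-- Shuffle product on the extended tensor algebra (coefficient-wise finite sums). -/
noncomputable def shuffle (p q : ETA d) : ETA d :=
  fun v => ∑ k ∈ Finset.range (v.length + 1),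
    ∑ u ∈ wordsLen d k, ∑ w ∈ wordsLen d (v.length - k),
      p u * q w * ((shuffleW u w).count v : ℝ)

/-- Shuffle powers. -/
noncomputable def spow (p : ETA d) : ℕ → ETA d
  | 0 => unit d
  | n + 1 => shuffle (spow p n) p

/-- A linear combination of single letters `Σ_i c i • e_i`. -/
def letters (c : Fin d → ℝ) : ETA d := fun v =>
  match v with
  | [i] => c i
  | _ => 0

/-- A single letter `e_i`. -/
noncomputable def letter (i : Fin d) : ETA d := fun v => if v = [i] then 1 else 0

/-- The resolvent `(∅ - q)⁻¹ = Σ_n q^{⊗n}`, defined coefficient-wise. -/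
noncomputable def res (q : ETA d) : ETA d := fun v => ∑' n, cpow q n v

/-- The shuffle exponential `exp^⧢(b) = Σ_n b^{⧢n}/n!`, defined coefficient-wise. -/
noncomputable def shuexp (b : ETA d) : ETA d := fun v => ∑' n, spow b n v / (Nat.factorial n : ℝ)

/-- Right projection `ℓ|_i`, removing a terminal letter `i`. -/
def proj (p : ETA d) (i : Fin d) : ETA d := fun v => p (v ++ [i])

end ETA

/-! Concatenation is a sum of products with non-negative structure constants, so domination
`q ⪯ p` propagates to every power: `q^{⊗n} ⪯ p^{⊗n}`. For summability of `Σ_n (p^{⊗n})^v`,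
split off the term of `(p^{⊗(n+1)})^v` with empty last factor: it equals
`p^∅ · (p^{⊗n})^v` plus a combination of coefficients of `p^{⊗n}` at proper prefixes of `v`,
which are summable in `n` by induction on the length of `v`. Since `p^∅ < 1`, this
recursion is dominated by a convergent geometric one. -/

theorem summable_of_le_add_mul {f g : ℕ → ℝ} {a : ℝ} (hf : ∀ n, 0 ≤ f n) (hg0 : ∀ n, 0 ≤ g n)
    (hg : Summable g) (ha1 : a < 1) (hrec : ∀ n, f (n + 1) ≤ g n + a * f n) :
    Summable f := by
  refine summable_of_sum_range_le (c := (f 0 + ∑' n, g n) / (1 - a)) hf fun N => ?_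
  rw [le_div_iff₀ (by linarith)]
  set S := ∑ n ∈ Finset.range N, f n
  have hS_succ : ∑ n ∈ Finset.range (N + 1), f n ≤ f 0 + ∑' n, g n + a * S :=
    calc ∑ n ∈ Finset.range (N + 1), f n = f 0 + ∑ n ∈ Finset.range N, f (n + 1) :=
          Finset.sum_range_succ' _ _ |>.trans (add_comm _ _)
      _ ≤ f 0 + (∑ n ∈ Finset.range N, g n + a * S) := by
          rw [Finset.mul_sum, ← Finset.sum_add_distrib]
          gcongr with n
          exact hrec n
      _ ≤ f 0 + ∑' n, g n + a * S := by
          have := hg.sum_le_tsum (Finset.range N) fun n _ => hg0 n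
          linarith
  have hS_le : S ≤ ∑ n ∈ Finset.range (N + 1), f n := by
    rw [Finset.sum_range_succ]
    linarith [hf N]
  linarith

namespace ETA

variable {d : ℕ}

theorem cpow_succ_apply (p : ETA d) (n : ℕ) (v : Word d) :
    cpow p (n + 1) v = ∑ k ∈ Finset.range (v.length + 1), cpow p n (v.take k) * p (v.drop k) :=
  rfl

theorem cpow_succ_apply_eq_add (p : ETA d) (n : ℕ) (v : Word d) :
    cpow p (n + 1) v =
      ∑ k ∈ Finset.range v.length, cpow p n (v.take k) * p (v.drop k) + p [] * cpow p n v := by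
  rw [cpow_succ_apply, Finset.sum_range_succ, List.take_length, List.drop_length, mul_comm]

theorem cpow_nonneg {p : ETA d} (hp : ∀ v, 0 ≤ p v) (n : ℕ) (v : Word d) : 0 ≤ cpow p n v := by
  induction n generalizing v with
  | zero => unfold cpow unit; split <;> norm_num
  | succ n ih =>
    rw [cpow_succ_apply]
    exact Finset.sum_nonneg fun k _ => mul_nonneg (ih _) (hp _)

theorem abs_cpow_le {p q : ETA d} (h : ∀ v, |q v| ≤ p v) (n : ℕ) (v : Word d) :
    |cpow q n v| ≤ cpow p n v := by
  have hp : ∀ w, 0 ≤ p w := fun w => (abs_nonneg _).trans (h w)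
  induction n generalizing v with
  | zero => unfold cpow unit; split <;> simp
  | succ n ih =>
    rw [cpow_succ_apply]
    calc |∑ k ∈ Finset.range (v.length + 1), cpow q n (v.take k) * q (v.drop k)|
        ≤ ∑ k ∈ Finset.range (v.length + 1), |cpow q n (v.take k) * q (v.drop k)| :=
          Finset.abs_sum_le_sum_abs _ _
      _ ≤ cpow p (n + 1) v := by
          refine Finset.sum_le_sum fun k _ => ?_
          rw [abs_mul]
          exact mul_le_mul (ih _) (h _) (abs_nonneg _) (cpow_nonneg hp _ _)

theorem summable_cpow {p : ETA d} (hp : ∀ v, 0 ≤ p v) (hp1 : p [] < 1) (v : Word d) :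
    Summable fun n => cpow p n v := by
  have hprefix : Summable fun n =>
      ∑ k ∈ Finset.range v.length, cpow p n (v.take k) * p (v.drop k) :=
    summable_sum fun k hk => (summable_cpow hp hp1 (v.take k)).mul_right _
  refine summable_of_le_add_mul (cpow_nonneg hp · v)
    (fun n => Finset.sum_nonneg fun k _ => mul_nonneg (cpow_nonneg hp _ _) (hp _))
    hprefix hp1 fun n => (cpow_succ_apply_eq_add p n v).le
termination_by v.length
decreasing_by
  rw [List.length_take]
  exact min_lt_of_left_lt (Finset.mem_range.mp hk)

end ETA

theorem res_dominated_general (d : ℕ) (p q : ETA d) (hp : |p []| < 1)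
    (hdom : ∀ v : Word d, |q v| ≤ p v) :
    ∀ v : Word d, |ETA.res q v| ≤ ETA.res p v := by
  intro v
  have hp0 : ∀ w, 0 ≤ p w := fun w => (abs_nonneg _).trans (hdom w)
  exact tsum_of_norm_bounded (f := fun n => ETA.cpow q n v)
    (ETA.summable_cpow hp0 (abs_lt.mp hp).2 v).hasSum (ETA.abs_cpow_le hdom · v)

/-- If `q` is dominated by `p` (and both have scalar part of absolute
value `< 1`), then the resolvent of `q` is dominated by the resolvent of `p`. -/
theorem res_dominated (d : ℕ) (p q : ETA d) (hp : |p []| < 1) (hq : |q []| < 1)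
    (hdom : ∀ v : Word d, |q v| ≤ p v) :
    ∀ v : Word d, |ETA.res q v| ≤ ETA.res p v :=
  res_dominated_general d p q hp hdom
end

section
/- Let ℓ be any element of the extended tensor algebra over ℝ^d, i a letter, and b = Σ_{j=1}^d b^j e_j a linear combination of single letters. Then ℓ⊗e_i⊗exp^{⧢}(b) = exp^{⧢}(b) ⧢ ((exp^{⧢}(-b) ⧢ ℓ)⊗e_i). -/
open scoped BigOperators

/-!
An element of the extended tensor algebra is determined by its coefficient at `∅` together with
its right derivatives `X|_j = proj X j`. These act on `⊗` by `(p ⊗ q)|_j = p ⊗ q|_j + q(∅) p|_j`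
and on `⧢` as derivations, and `exp^⧢(b)|_j = b^j exp^⧢(b)` when `b` is a combination of letters.
So both sides `X` of the identity vanish at `∅` and satisfy `X|_j = b^j X + [j = i] ℓ` (for the
right side via `exp^⧢(b) ⧢ (exp^⧢(-b) ⧢ ℓ) = ℓ`, itself proved the same way), a recursion with a
unique solution.
-/

namespace ETA

section ShuffleWords

variable {A : Type*}

@[simp] lemma shuffleW_nil_left (w : List A) : shuffleW [] w = {w} := by
  cases w <;> rw [shuffleW]

@[simp] lemma shuffleW_nil_right (u : List A) : shuffleW u [] = {u} := by
  cases u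
  · rw [shuffleW]
  · rw [shuffleW]; simp

lemma shuffleW_cons_cons (a b : A) (u w : List A) :
    shuffleW (a :: u) (b :: w) =
      (shuffleW u (b :: w)).map (a :: ·) + (shuffleW (a :: u) w).map (b :: ·) := by
  rw [shuffleW]

lemma shuffleW_append_singleton : ∀ (u w : List A) (a b : A),
    shuffleW (u ++ [a]) (w ++ [b]) =
      (shuffleW u (w ++ [b])).map (· ++ [a]) + (shuffleW (u ++ [a]) w).map (· ++ [b])
  | [], [], a, b => by
      simp only [List.nil_append, List.cons_append, shuffleW_cons_cons, shuffleW_nil_left,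
        shuffleW_nil_right, Multiset.map_singleton]
      exact Multiset.add_comm _ _
  | [], c :: w, a, b => by
      have ih := shuffleW_append_singleton [] w a b
      simp only [List.nil_append] at ih
      simp only [List.nil_append, List.cons_append, shuffleW_cons_cons, ih,
        shuffleW_nil_left, Multiset.map_map, Multiset.map_add, Multiset.map_singleton,
        Function.comp_def, List.append_assoc]
      abel
  | c :: u, [], a, b => by
      have ih := shuffleW_append_singleton u [] a b
      simp only [List.nil_append] at ih
      simp only [List.nil_append, List.cons_append, shuffleW_cons_cons, ih,
        shuffleW_nil_right, Multiset.map_map, Multiset.map_add,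
        Multiset.map_singleton, Function.comp_def, List.append_assoc]
      abel
  | c :: u, e :: w, a, b => by
      have ih₁ := shuffleW_append_singleton u (e :: w) a b
      have ih₂ := shuffleW_append_singleton (c :: u) w a b
      simp only [List.cons_append] at ih₁ ih₂
      simp only [List.cons_append, shuffleW_cons_cons, ih₁, ih₂, Multiset.map_map,
        Multiset.map_add, Function.comp_def]
      abel
  termination_by u w => u.length + w.length
  decreasing_by all_goals (simp only [List.length_cons, List.length_nil]; omega)

variable [DecidableEq A]

lemma count_append_singleton_map_append_singleton (S : Multiset (List A)) (a j : A)
    (v : List A) :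
    (S.map (· ++ [a])).count (v ++ [j]) = if a = j then S.count v else 0 := by
  split_ifs with h
  · subst h
    exact Multiset.count_map_eq_count' _ _ (List.append_left_injective [a]) v
  · refine Multiset.count_eq_zero.mpr fun hm => ?_
    obtain ⟨x, -, hx⟩ := Multiset.mem_map.mp hm
    exact h (by simpa using (List.append_inj' hx rfl).2)

lemma count_shuffleW_append_singleton (u w v : List A) (j : A) :
    (shuffleW u w).count (v ++ [j]) =
      (if u.getLast? = some j then (shuffleW u.dropLast w).count v else 0) +
      (if w.getLast? = some j then (shuffleW u w.dropLast).count v else 0) := by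
  have hsingle (x : List A) (a : A) :
      ({x ++ [a]} : Multiset (List A)) = ({x} : Multiset (List A)).map (· ++ [a]) := by simp
  rcases List.eq_nil_or_concat u with rfl | ⟨u, a, rfl⟩ <;>
    rcases List.eq_nil_or_concat w with rfl | ⟨w, b, rfl⟩ <;>
    simp only [List.concat_eq_append, List.getLast?_nil, List.getLast?_concat,
      List.dropLast_concat, Option.some_inj, reduceCtorEq, if_false, add_zero, zero_add]
  · simp
  · rw [shuffleW_nil_left, shuffleW_nil_left, hsingle, count_append_singleton_map_append_singleton]
  · rw [shuffleW_nil_right, shuffleW_nil_right, hsingle,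
      count_append_singleton_map_append_singleton]
  · rw [shuffleW_append_singleton, Multiset.count_add,
      count_append_singleton_map_append_singleton, count_append_singleton_map_append_singleton]

end ShuffleWords

variable {d : ℕ}

lemma mem_wordsLen {u : Word d} {n : ℕ} : u ∈ wordsLen d n ↔ u.length = n := by
  simp only [wordsLen, Finset.mem_image, Finset.mem_univ, true_and]
  constructor
  · rintro ⟨f, rfl⟩
    exact List.length_ofFn
  · rintro rfl
    exact ⟨u.get, List.ofFn_get u⟩

lemma wordsLen_zero : wordsLen d 0 = {[]} := by
  ext u
  simp [mem_wordsLen]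

lemma sum_wordsLen_succ {M : Type*} [AddCommMonoid M] (n : ℕ) (f : Word d → M) :
    ∑ u ∈ wordsLen d (n + 1), f u = ∑ a : Fin d, ∑ u ∈ wordsLen d n, f (u ++ [a]) := by
  have hsnoc :
      wordsLen d (n + 1) = (wordsLen d n ×ˢ Finset.univ).image (fun p => p.1 ++ [p.2]) := by
    ext u
    simp only [mem_wordsLen, Finset.mem_image, Finset.mem_product, Finset.mem_univ, and_true,
      Prod.exists]
    constructor
    · intro hu
      obtain ⟨w, a, rfl⟩ := (List.eq_nil_or_concat u).resolve_left (by rintro rfl; simp at hu)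
      exact ⟨w, a, by simpa using hu, by simp⟩
    · rintro ⟨w, a, rfl, rfl⟩
      simp
  rw [hsnoc, Finset.sum_image, Finset.sum_product, Finset.sum_comm]
  rintro ⟨w, a⟩ - ⟨w', a'⟩ - h
  obtain ⟨rfl, h⟩ := List.append_inj' h rfl
  simp_all

noncomputable def sumWordPairs {M : Type*} [AddCommMonoid M] (n : ℕ)
    (g : Word d → Word d → M) : M :=
  ∑ k ∈ Finset.range (n + 1), ∑ u ∈ wordsLen d k, ∑ w ∈ wordsLen d (n - k), g u w

section SumWordPairs

variable {M : Type*} [AddCommMonoid M]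

lemma sumWordPairs_zero (g : Word d → Word d → M) : sumWordPairs 0 g = g [] [] := by
  simp [sumWordPairs, wordsLen_zero]

lemma sumWordPairs_add (n : ℕ) (g₁ g₂ : Word d → Word d → M) :
    sumWordPairs n (fun u w => g₁ u w + g₂ u w) =
      sumWordPairs n g₁ + sumWordPairs n g₂ := by
  simp only [sumWordPairs, Finset.sum_add_distrib]

lemma sumWordPairs_succ_left (n : ℕ) (g : Word d → Word d → M) :
    sumWordPairs (n + 1) g = ∑ w ∈ wordsLen d (n + 1), g [] w +
      ∑ a : Fin d, sumWordPairs n (fun u w => g (u ++ [a]) w) := by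
  rw [sumWordPairs, Finset.sum_range_succ', add_comm, wordsLen_zero, Finset.sum_singleton,
    Nat.sub_zero]
  simp only [Nat.add_sub_add_right, sum_wordsLen_succ, sumWordPairs]
  exact congrArg _ Finset.sum_comm

lemma sumWordPairs_succ_right (n : ℕ) (g : Word d → Word d → M) :
    sumWordPairs (n + 1) g = ∑ u ∈ wordsLen d (n + 1), g u [] +
      ∑ b : Fin d, sumWordPairs n (fun u w => g u (w ++ [b])) := by
  rw [sumWordPairs, Finset.sum_range_succ, add_comm, Nat.sub_self, wordsLen_zero]
  simp only [Finset.sum_singleton, sumWordPairs]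
  refine congrArg _ ((Finset.sum_congr rfl fun k hk => ?_).trans Finset.sum_comm)
  rw [Nat.sub_add_comm (Finset.mem_range_succ_iff.mp hk)]
  simp only [sum_wordsLen_succ]
  exact Finset.sum_comm

end SumWordPairs

lemma shuffle_nil (p q : ETA d) : shuffle p q [] = p [] * q [] := by
  change sumWordPairs 0 _ = _
  simp [sumWordPairs_zero]

lemma proj_shuffle (p q : ETA d) (j : Fin d) :
    proj (shuffle p q) j = shuffle (proj p j) q + shuffle p (proj q j) := by
  funext v
  change sumWordPairs (M := ℝ) (v ++ [j]).length _ =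
    sumWordPairs v.length _ + sumWordPairs v.length _
  simp only [List.length_append, List.length_singleton, count_shuffleW_append_singleton,
    Nat.cast_add, mul_add, sumWordPairs_add]
  congr 1
  · rw [sumWordPairs_succ_left, Finset.sum_eq_single j]
    · simp [proj]
    · intro a _ ha
      simp [sumWordPairs, ha]
    · simp
  · rw [sumWordPairs_succ_right, Finset.sum_eq_single j]
    · simp [proj]
    · intro a _ ha
      simp [sumWordPairs, ha]
    · simp

lemma shuffle_smul_left (r : ℝ) (p q : ETA d) : shuffle (r • p) q = r • shuffle p q := by
  funext v
  simp only [shuffle, Pi.smul_apply, smul_eq_mul, Finset.mul_sum, mul_assoc]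

lemma shuffle_smul_right (r : ℝ) (p q : ETA d) : shuffle p (r • q) = r • shuffle p q := by
  funext v
  simp only [shuffle, Pi.smul_apply, smul_eq_mul, Finset.mul_sum]
  exact Finset.sum_congr rfl fun _ _ => Finset.sum_congr rfl fun _ _ =>
    Finset.sum_congr rfl fun _ _ => by ring

lemma shuffle_add_right (p q₁ q₂ : ETA d) :
    shuffle p (q₁ + q₂) = shuffle p q₁ + shuffle p q₂ := by
  funext v
  simp only [shuffle, Pi.add_apply, mul_add, add_mul, Finset.sum_add_distrib]

lemma shuffle_zero_left (q : ETA d) : shuffle 0 q = 0 := by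
  funext v
  simp [shuffle]

lemma shuffle_zero_right (p : ETA d) : shuffle p 0 = 0 := by
  funext v
  simp [shuffle]

lemma proj_unit (j : Fin d) : proj (unit d) j = 0 := by
  funext v
  simp [proj, unit]

lemma shuffle_unit_left (q : ETA d) : shuffle (unit d) q = q := by
  funext v
  induction v using List.reverseRecOn generalizing q with
  | nil => simp [shuffle_nil, unit]
  | append_singleton v j ih =>
    change proj (shuffle (unit d) q) j v = proj q j v
    simp [proj_shuffle, proj_unit, shuffle_zero_left, ih]

lemma shuffle_unit_right (p : ETA d) : shuffle p (unit d) = p := by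
  funext v
  induction v using List.reverseRecOn generalizing p with
  | nil => simp [shuffle_nil, unit]
  | append_singleton v j ih =>
    change proj (shuffle p (unit d)) j v = proj p j v
    simp [proj_shuffle, proj_unit, shuffle_zero_right, ih]

lemma neg_letters (c : Fin d → ℝ) : -letters c = letters (-c) := by
  funext w
  rcases w with _ | ⟨a, _ | ⟨x, t⟩⟩ <;> simp [letters]

lemma proj_letters (c : Fin d → ℝ) (j : Fin d) : proj (letters c) j = c j • unit d := by
  funext w
  rcases w with _ | ⟨a, _ | ⟨x, t⟩⟩ <;> simp [proj, letters, unit]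

lemma proj_spow_letters_succ (c : Fin d → ℝ) (j : Fin d) :
    ∀ n : ℕ, proj (spow (letters c) (n + 1)) j = ((n + 1 : ℝ) * c j) • spow (letters c) n
  | 0 => by simp [spow, shuffle_unit_left, proj_letters]
  | n + 1 => by
    rw [spow, proj_shuffle, proj_spow_letters_succ c j n, shuffle_smul_left, proj_letters,
      shuffle_smul_right, shuffle_unit_right, ← spow]
    push_cast
    module

lemma spow_letters_of_length_ne (c : Fin d → ℝ) :
    ∀ (n : ℕ) (v : Word d), v.length ≠ n → spow (letters c) n v = 0
  | 0, v, hv => by simpa [spow, unit] using hv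
  | n + 1, v, hv => by
    rcases List.eq_nil_or_concat v with rfl | ⟨w, j, rfl⟩
    · simp [spow, shuffle_nil, letters]
    · rw [List.concat_eq_append]
      change proj (spow (letters c) (n + 1)) j w = 0
      rw [proj_spow_letters_succ, Pi.smul_apply,
        spow_letters_of_length_ne c n w (by simpa using hv), smul_zero]

lemma shuexp_letters_nil (c : Fin d → ℝ) : shuexp (letters c) [] = 1 := by
  rw [shuexp, tsum_eq_single 0 fun n hn => by
    rw [spow_letters_of_length_ne c n [] (Ne.symm hn), zero_div]]
  simp [spow, unit]

lemma proj_shuexp_letters (c : Fin d → ℝ) (j : Fin d) :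
    proj (shuexp (letters c)) j = c j • shuexp (letters c) := by
  funext w
  simp only [proj, shuexp, Pi.smul_apply, smul_eq_mul]
  rw [tsum_eq_single (w.length + 1) fun n hn => by
      rw [spow_letters_of_length_ne c n _ (by simpa using Ne.symm hn), zero_div],
    tsum_eq_single w.length fun n hn => by
      rw [spow_letters_of_length_ne c n _ (Ne.symm hn), zero_div],
    show spow (letters c) (w.length + 1) (w ++ [j]) = _ from
      congrFun (proj_spow_letters_succ c j w.length) w, Pi.smul_apply, smul_eq_mul,
    Nat.factorial_succ]
  push_cast
  field_simp

lemma shuffle_shuexp_shuffle_shuexp_neg (c : Fin d → ℝ) (ℓ : ETA d) :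
    shuffle (shuexp (letters c)) (shuffle (shuexp (-letters c)) ℓ) = ℓ := by
  rw [neg_letters]
  funext v
  induction v using List.reverseRecOn generalizing ℓ with
  | nil => simp [shuffle_nil, shuexp_letters_nil]
  | append_singleton v j ih =>
    change proj (shuffle _ _) j v = proj ℓ j v
    rw [proj_shuffle, proj_shuffle, proj_shuexp_letters, proj_shuexp_letters, shuffle_smul_left,
      shuffle_smul_left, shuffle_add_right, shuffle_smul_right]
    simp [ih]

lemma concat_nil (p q : ETA d) : concat p q [] = p [] * q [] := by
  simp [concat]

lemma proj_concat (p q : ETA d) (j : Fin d) :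
    proj (concat p q) j = concat p (proj q j) + q [] • proj p j := by
  funext v
  simp only [concat, proj, Pi.add_apply, Pi.smul_apply, smul_eq_mul, List.length_append,
    List.length_singleton, Finset.sum_range_succ _ (v.length + 1)]
  congr 1
  · refine Finset.sum_congr rfl fun k hk => ?_
    have hk : k ≤ v.length := Finset.mem_range_succ_iff.mp hk
    rw [List.take_append_of_le_length hk, List.drop_append_of_le_length hk]
  · have hlen : v.length + 1 = (v ++ [j]).length := by simp
    rw [hlen, List.take_length, List.drop_length, mul_comm]

lemma concat_smul_right (r : ℝ) (p q : ETA d) : concat p (r • q) = r • concat p q := by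
  funext v
  simp only [concat, Pi.smul_apply, smul_eq_mul, Finset.mul_sum]
  exact Finset.sum_congr rfl fun _ _ => by ring

lemma concat_zero_right (p : ETA d) : concat p 0 = 0 := by
  funext v
  simp [concat]

lemma concat_unit_right (p : ETA d) : concat p (unit d) = p := by
  funext v
  induction v using List.reverseRecOn with
  | nil => simp [concat_nil, unit]
  | append_singleton v j _ =>
    change proj (concat p (unit d)) j v = proj p j v
    simp [proj_concat, proj_unit, concat_zero_right, unit]

lemma proj_letter (i j : Fin d) : proj (letter i) j = if j = i then unit d else 0 := by
  funext w
  split_ifs with h <;> simp [proj, letter, unit, List.append_eq_singleton_iff, h]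

lemma proj_concat_letter (p : ETA d) (i j : Fin d) :
    proj (concat p (letter i)) j = if j = i then p else 0 := by
  rw [proj_concat, proj_letter]
  split_ifs <;> simp [concat_unit_right, concat_zero_right, letter]

lemma eq_of_proj_eq_smul_add {X Y : ETA d} (c : Fin d → ℝ) (r : Fin d → ETA d)
    (hX : ∀ j, proj X j = c j • X + r j) (hY : ∀ j, proj Y j = c j • Y + r j)
    (h_nil : X [] = Y []) : X = Y := by
  funext v
  induction v using List.reverseRecOn with
  | nil => exact h_nil
  | append_singleton v j ih =>
    change proj X j v = proj Y j v
    simp [hX, hY, ih]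

end ETA

/-- For any `ℓ` in the extended tensor algebra, a letter `i` and a
linear combination of single letters `b`:
`ℓ ⊗ e_i ⊗ exp^⧢(b) = exp^⧢(b) ⧢ ((exp^⧢(-b) ⧢ ℓ) ⊗ e_i)`. -/
theorem exponential_shuffle_identity (d : ℕ) (ℓ : ETA d) (i : Fin d) (b : Fin d → ℝ) :
    ETA.concat (ETA.concat ℓ (ETA.letter i)) (ETA.shuexp (ETA.letters b))
      = ETA.shuffle (ETA.shuexp (ETA.letters b))
          (ETA.concat (ETA.shuffle (ETA.shuexp (-(ETA.letters b))) ℓ) (ETA.letter i)) := by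
  open ETA in
  refine eq_of_proj_eq_smul_add b (fun j => if j = i then ℓ else 0) (fun j => ?_) (fun j => ?_) ?_
  · rw [proj_concat, proj_shuexp_letters, concat_smul_right, proj_concat_letter,
      shuexp_letters_nil, one_smul]
  · rw [proj_shuffle, proj_shuexp_letters, shuffle_smul_left, proj_concat_letter]
    split_ifs
    · rw [shuffle_shuexp_shuffle_shuexp_neg]
    · rw [shuffle_zero_right]
  · simp [concat_nil, shuffle_nil, letter]
end
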